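/- Let p ≥ 2, let f : ℝ^d → ℝ be convex and differentiable, attaining its minimum f* at x*, with bounded sublevel sets; set R = sup{ ‖x − x*‖ : f(x) ≤ f(X_0) }. Let X : [0, ∞) → ℝ^d be a differentiable curve satisfying the rescaled gradient flow Ẋ_t = −∇f(X_t)/‖∇f(X_t)‖^{(p−2)/(p−1)} whenever ∇f(X_t) ≠ 0 (and Ẋ_t = 0 when ∇f(X_t) = 0). Then for all t > 0, f(X_t) − f* ≤ (p−1)^{p−1} R^p / t^{p−1}. -/

import Mathlib

/-! Along the flow the gap `E = f ∘ X - f*` has derivative `-‖∇f‖^(1 + 1/(p-1))`, so it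
decreases and `X` stays in the initial sublevel set, within distance `R` of `x*`. Convexity then
gives `E ≤ R ‖∇f‖`, hence `E' ≤ -(E / R)^(1 + 1/(p-1))`: along this differential inequality
`E^(-1/(p-1))` grows at least linearly, with slope `1 / ((p-1) R^(p/(p-1)))`, and inverting
gives the rate. -/

open scoped RealInnerProductSpace
open Real Set

noncomputable section

theorem ConvexOn.add_fderiv_sub_le {E : Type*} [NormedAddCommGroup E] [NormedSpace ℝ E]
    {f : E → ℝ} (hf : ConvexOn ℝ univ f) {x : E} (hx : DifferentiableAt ℝ f x) (y : E) :
    f x + fderiv ℝ f x (y - x) ≤ f y := by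
  set L : ℝ →ᵃ[ℝ] E := AffineMap.lineMap x y
  have hline : ConvexOn ℝ univ (f ∘ L) := (hf.comp_affineMap L).subset (subset_univ _) convex_univ
  have hderiv : HasDerivAt (f ∘ L) (fderiv ℝ f x (y - x)) 0 := by
    have hx' : DifferentiableAt ℝ f (L 0) := by simpa [L] using hx
    simpa [L] using hx'.hasFDerivAt.comp_hasDerivAt (0 : ℝ) AffineMap.hasDerivAt_lineMap
  have := hline.le_slope_of_hasDerivAt (mem_univ 0) (mem_univ 1) one_pos hderiv
  simp only [slope_def_field, Function.comp_apply, L, AffineMap.lineMap_apply_zero,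
    AffineMap.lineMap_apply_one, sub_zero, div_one] at this
  linarith

section InnerProductSpace

variable {F : Type*} [NormedAddCommGroup F] [InnerProductSpace ℝ F] [CompleteSpace F]

theorem ConvexOn.sub_le_norm_gradient_mul_norm_sub {f : F → ℝ} (hf : ConvexOn ℝ univ f)
    {x : F} (hx : DifferentiableAt ℝ f x) (y : F) :
    f x - f y ≤ ‖gradient f x‖ * ‖x - y‖ := by
  have hsupport := hf.add_fderiv_sub_le hx y
  rw [← inner_gradient_left] at hsupport
  have hcs : -⟪gradient f x, y - x⟫ ≤ ‖gradient f x‖ * ‖x - y‖ := by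
    rw [← inner_neg_right, neg_sub]
    exact real_inner_le_norm _ _
  linarith

theorem DifferentiableAt.hasDerivAt_comp_inner_gradient {f : F → ℝ} {X : ℝ → F} {X' : F}
    {t : ℝ} (hf : DifferentiableAt ℝ f (X t)) (hX : HasDerivAt X X' t) :
    HasDerivAt (fun s => f (X s)) ⟪gradient f (X t), X'⟫ t := by
  rw [inner_gradient_left]
  exact hf.hasFDerivAt.comp_hasDerivAt t hX

/-- At a critical point the junk value of `1 / 0 ^ a` is multiplied by `0`, so the field vanishes
there, as the flow requires. -/
def rescaledGradient (p : ℝ) (f : F → ℝ) (x : F) : F :=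
  -(1 / ‖gradient f x‖ ^ ((p - 2) / (p - 1))) • gradient f x

theorem inner_gradient_rescaledGradient {p : ℝ} (hp : 1 < p) (f : F → ℝ) (x : F) :
    ⟪gradient f x, rescaledGradient p f x⟫ = -‖gradient f x‖ ^ (1 + (p - 1)⁻¹) := by
  have hexp : 1 + (p - 1)⁻¹ = 2 - (p - 2) / (p - 1) := by
    field_simp [(sub_pos.2 hp).ne']
    ring
  rcases eq_or_ne (gradient f x) 0 with h | h
  · simp [rescaledGradient, h, zero_rpow (by positivity : 1 + (p - 1)⁻¹ ≠ 0)]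
  · have hpos : 0 < ‖gradient f x‖ := norm_pos_iff.2 h
    rw [rescaledGradient, inner_smul_right, real_inner_self_eq_norm_sq, hexp,
      rpow_sub hpos, rpow_two]
    ring

theorem DifferentiableAt.hasDerivAt_comp_of_hasDerivAt_rescaledGradient {p : ℝ} (hp : 1 < p)
    {f : F → ℝ} {X : ℝ → F} {t : ℝ} (hf : DifferentiableAt ℝ f (X t))
    (hX : HasDerivAt X (rescaledGradient p f (X t)) t) :
    HasDerivAt (fun s => f (X s)) (-‖gradient f (X t)‖ ^ (1 + (p - 1)⁻¹)) t := by
  simpa only [inner_gradient_rescaledGradient hp] using hf.hasDerivAt_comp_inner_gradient hX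

end InnerProductSpace

theorem norm_sub_le_sSup_of_le {F : Type*} [SeminormedAddCommGroup F] {f : F → ℝ} {c : ℝ}
    (hbdd : Bornology.IsBounded {y | f y ≤ c}) (x₀ : F) {y : F} (hy : f y ≤ c) :
    ‖y - x₀‖ ≤ sSup {r | ∃ y, f y ≤ c ∧ r = ‖y - x₀‖} := by
  obtain ⟨C, hC⟩ := hbdd.subset_closedBall x₀
  refine le_csSup ⟨C, ?_⟩ ⟨y, hy, rfl⟩
  rintro r ⟨z, hz, rfl⟩
  simpa [dist_eq_norm] using hC hz

theorem antitoneOn_of_hasDerivAt_nonpos {D : Set ℝ} (hD : Convex ℝ D) {u u' : ℝ → ℝ}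
    (hu : ∀ s ∈ D, HasDerivAt u (u' s) s) (hu' : ∀ s ∈ D, u' s ≤ 0) : AntitoneOn u D :=
  antitoneOn_of_hasDerivWithinAt_nonpos hD (fun s hs => (hu s hs).continuousAt.continuousWithinAt)
    (fun s hs => (hu s (interior_subset hs)).hasDerivWithinAt) fun s hs => hu' s (interior_subset hs)

theorem monotoneOn_of_hasDerivAt_nonneg {D : Set ℝ} (hD : Convex ℝ D) {u u' : ℝ → ℝ}
    (hu : ∀ s ∈ D, HasDerivAt u (u' s) s) (hu' : ∀ s ∈ D, 0 ≤ u' s) : MonotoneOn u D :=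
  monotoneOn_of_hasDerivWithinAt_nonneg hD (fun s hs => (hu s hs).continuousAt.continuousWithinAt)
    (fun s hs => (hu s (interior_subset hs)).hasDerivWithinAt) fun s hs => hu' s (interior_subset hs)

theorem mul_le_rpow_neg_inv_of_hasDerivAt_le_neg_mul_rpow {u u' : ℝ → ℝ} {k m T : ℝ}
    (hm : 0 < m) (hT : 0 ≤ T) (hu : ∀ s ∈ Icc 0 T, HasDerivAt u (u' s) s)
    (hpos : ∀ s ∈ Icc 0 T, 0 < u s) (hu' : ∀ s ∈ Icc 0 T, u' s ≤ -k * u s ^ (1 + m⁻¹)) :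
    k * m⁻¹ * T ≤ u T ^ (-m⁻¹) := by
  have hmono : MonotoneOn (fun s => u s ^ (-m⁻¹) - k * m⁻¹ * s) (Icc 0 T) := by
    refine monotoneOn_of_hasDerivAt_nonneg (convex_Icc 0 T) (fun s hs =>
      ((hu s hs).rpow_const (Or.inl (hpos s hs).ne')).sub ((hasDerivAt_id s).const_mul _))
      fun s hs => ?_
    have hcancel : u s ^ (-m⁻¹ - 1) * u s ^ (1 + m⁻¹) = 1 := by
      rw [← rpow_add (hpos s hs), show -m⁻¹ - 1 + (1 + m⁻¹) = 0 by ring, rpow_zero]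
    have hweight : 0 ≤ m⁻¹ * u s ^ (-m⁻¹ - 1) := by have := hpos s hs; positivity
    have hrate : m⁻¹ * u s ^ (-m⁻¹ - 1) * (-k * u s ^ (1 + m⁻¹)) = -(k * m⁻¹) := by
      linear_combination (-(k * m⁻¹)) * hcancel
    linarith [mul_le_mul_of_nonneg_left (hu' s hs) hweight]
  have h0mem : (0 : ℝ) ∈ Icc 0 T := ⟨le_rfl, hT⟩
  have hgrowth := hmono h0mem ⟨hT, le_rfl⟩ hT
  simp only [mul_zero, sub_zero] at hgrowth
  linarith [rpow_pos_of_pos (hpos 0 h0mem) (-m⁻¹)]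

theorem le_of_hasDerivAt_le_neg_div_rpow {u u' : ℝ → ℝ} {R m T : ℝ} (hR : 0 < R)
    (hm : 0 < m) (hT : 0 < T) (hu : ∀ s ∈ Icc 0 T, HasDerivAt u (u' s) s)
    (hu0 : ∀ s ∈ Icc 0 T, 0 ≤ u s) (hu' : ∀ s ∈ Icc 0 T, u' s ≤ -(u s / R) ^ (1 + m⁻¹)) :
    u T ≤ m ^ m * R ^ (m + 1) / T ^ m := by
  have hTmem : T ∈ Icc 0 T := ⟨hT.le, le_rfl⟩
  -- `u ^ (-1/m)` below needs `u > 0`; once `u` vanishes, it stays `0` since `u' ≤ 0`.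
  by_cases hzero : ∃ s ∈ Icc 0 T, u s = 0
  · obtain ⟨s, hs, hus⟩ := hzero
    have hanti : AntitoneOn u (Icc 0 T) :=
      antitoneOn_of_hasDerivAt_nonpos (convex_Icc 0 T) hu fun s hs =>
        (hu' s hs).trans (neg_nonpos.2 (by have := hu0 s hs; positivity))
    calc u T ≤ u s := hanti hs hTmem hs.2
      _ = 0 := hus
      _ ≤ m ^ m * R ^ (m + 1) / T ^ m := by positivity
  push Not at hzero
  have hpos : ∀ s ∈ Icc 0 T, 0 < u s := fun s hs => (hu0 s hs).lt_of_ne' (hzero s hs)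
  set k := (R ^ (1 + m⁻¹))⁻¹
  have hu'k : ∀ s ∈ Icc 0 T, u' s ≤ -k * u s ^ (1 + m⁻¹) := fun s hs => by
    have := hu' s hs
    rwa [div_rpow (hu0 s hs) hR.le, div_eq_inv_mul, ← neg_mul] at this
  calc u T = (u T ^ (-m⁻¹)) ^ (-m) := by
        rw [← rpow_mul (hu0 T hTmem), neg_mul_neg, inv_mul_cancel₀ hm.ne', rpow_one]
    _ ≤ (k * m⁻¹ * T) ^ (-m) :=
        rpow_le_rpow_of_nonpos (by positivity)
          (mul_le_rpow_neg_inv_of_hasDerivAt_le_neg_mul_rpow hm hT.le hu hpos hu'k)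
          (by linarith)
    _ = m ^ m * R ^ (m + 1) / T ^ m := by
        rw [rpow_neg (by positivity), ← inv_rpow (by positivity), mul_inv, mul_inv, inv_inv,
          inv_inv, mul_rpow (by positivity) (by positivity), mul_rpow (by positivity) hm.le,
          ← rpow_mul hR.le, add_mul, inv_mul_cancel₀ hm.ne', one_mul, inv_rpow hT.le]
        ring

theorem rescaled_gradient_flow_rate
    (d : ℕ) (p : ℝ) (hp : 2 ≤ p)
    (f : EuclideanSpace ℝ (Fin d) → ℝ)
    (hconv : ConvexOn ℝ Set.univ f) (hdiff : Differentiable ℝ f)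
    (xstar : EuclideanSpace ℝ (Fin d)) (hmin : ∀ x, f xstar ≤ f x)
    (X X' : ℝ → EuclideanSpace ℝ (Fin d))
    (hX : ∀ t ≥ (0 : ℝ), HasDerivAt X (X' t) t)
    (hflow : ∀ t ≥ (0 : ℝ), gradient f (X t) ≠ 0 →
      X' t = -(1 / ‖gradient f (X t)‖ ^ ((p - 2) / (p - 1))) • gradient f (X t))
    (hflow0 : ∀ t ≥ (0 : ℝ), gradient f (X t) = 0 → X' t = 0)
    (hbdd : Bornology.IsBounded {y : EuclideanSpace ℝ (Fin d) | f y ≤ f (X 0)})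
    (R : ℝ)
    (hR : R = sSup {r : ℝ | ∃ y, f y ≤ f (X 0) ∧ r = ‖y - xstar‖}) :
    ∀ t : ℝ, 0 < t →
      f (X t) - f xstar ≤ (p - 1) ^ (p - 1) * R ^ p / t ^ (p - 1) := by
  intro t ht
  have hp1 : 1 < p := by linarith
  have hflow' : ∀ s ≥ (0 : ℝ), X' s = rescaledGradient p f (X s) := fun s hs => by
    by_cases h : gradient f (X s) = 0
    · simp [rescaledGradient, h, hflow0 s hs h]
    · exact hflow s hs h
  have hE : ∀ s ∈ Ici (0 : ℝ), HasDerivAt (fun s => f (X s) - f xstar)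
      (-‖gradient f (X s)‖ ^ (1 + (p - 1)⁻¹)) s := fun s hs =>
    ((hdiff _).hasDerivAt_comp_of_hasDerivAt_rescaledGradient hp1
      (hflow' s hs ▸ hX s hs)).sub_const _
  have hanti : AntitoneOn (fun s => f (X s) - f xstar) (Ici 0) :=
    antitoneOn_of_hasDerivAt_nonpos (convex_Ici 0) hE fun s _ =>
      neg_nonpos.2 (rpow_nonneg (norm_nonneg _) _)
  have hXR : ∀ s ≥ (0 : ℝ), ‖X s - xstar‖ ≤ R := fun s hs =>
    hR ▸ norm_sub_le_sSup_of_le hbdd xstar (by linarith [hanti self_mem_Ici hs hs])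
  have hgap : ∀ s ≥ (0 : ℝ), f (X s) - f xstar ≤ ‖gradient f (X s)‖ * R := fun s hs =>
    (hconv.sub_le_norm_gradient_mul_norm_sub (hdiff _) xstar).trans
      (mul_le_mul_of_nonneg_left (hXR s hs) (norm_nonneg _))
  rcases (norm_nonneg _ |>.trans (hXR 0 le_rfl)).eq_or_lt with rfl | hRpos
  · rw [zero_rpow (by linarith), mul_zero, zero_div]
    simpa using hgap t ht.le
  simpa using le_of_hasDerivAt_le_neg_div_rpow hRpos (by linarith : 0 < p - 1) ht
    (fun s hs => hE s hs.1) (fun s _ => sub_nonneg.2 (hmin _)) fun s hs =>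
      neg_le_neg (rpow_le_rpow (div_nonneg (sub_nonneg.2 (hmin _)) hRpos.le)
        ((div_le_iff₀ hRpos).2 (hgap s hs.1)) (by positivity))
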